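/- Let B be an n×n matrix with strictly positive entries satisfying the Perron approximation ‖ρ^{-n}B^n − m m̃^T‖_max ≤ λ^n for large n (0 < λ < 1, ρ = ρ(B), m, m̃ the normalized right/left Perron vectors), and let x be nonnegative and nonzero. Then the ratio ‖B^{n+1}x‖_1 / ‖B^n x‖_1 converges to ρ exponentially quickly. -/

import Mathlib

open Matrix

/-- The spectral radius of a real square matrix: the supremum of the absolute
values of its complex eigenvalues. -/
noncomputable def specRad {V : Type} [Fintype V] [DecidableEq V] (A : Matrix V V ℝ) : ℝ :=
  sSup {x : ℝ | ∃ μ ∈ spectrum ℂ (A.map (algebraMap ℝ ℂ)), x = ‖μ‖}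

/-!
Write `aₖ = ‖Bᵏx‖₁ = ∑ᵢ (Bᵏx)ᵢ` (all entries are nonnegative). The Perron approximation gives
`|ρ⁻ᵏ aₖ - L| ≤ c λᵏ` with `L = (∑ᵢ mᵢ)(m̃ ⬝ x) > 0`. Hence `dₖ = ρ⁻ᵏ aₖ` is eventually at least
`L / 2`, consecutive terms differ by `O(λᵏ)`, and `aₖ₊₁ / aₖ - ρ = ρ (dₖ₊₁ - dₖ) / dₖ = O(λᵏ)`.
-/

open Filter

lemma exists_abs_div_sub_le_of_abs_inv_pow_mul_sub_le {a : ℕ → ℝ} {ρ L c lam : ℝ}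
    (hρ : 0 < ρ) (hL : 0 < L) (hc : 0 < c) (hlam0 : 0 ≤ lam) (hlam1 : lam < 1)
    (ha : ∀ᶠ k in atTop, |ρ⁻¹ ^ k * a k - L| ≤ c * lam ^ k) :
    ∃ C > 0, ∀ᶠ k in atTop, |a (k + 1) / a k - ρ| ≤ C * lam ^ k := by
  set d : ℕ → ℝ := fun k => ρ⁻¹ ^ k * a k
  have ratio_sub (k : ℕ) (hdk : d k ≠ 0) : a (k + 1) / a k - ρ = ρ * (d (k + 1) - d k) / d k := by
    have hak (k : ℕ) : a k = ρ ^ k * d k := by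
      rw [← mul_assoc, ← mul_pow, mul_inv_cancel₀ hρ.ne', one_pow, one_mul]
    rw [hak k, hak (k + 1)]
    field_simp
    ring
  have hsmall : ∀ᶠ k in atTop, c * lam ^ k ≤ L / 2 := by
    have := (tendsto_pow_atTop_nhds_zero_of_lt_one hlam0 hlam1).const_mul c
    rw [mul_zero] at this
    exact this.eventually (ge_mem_nhds (half_pos hL))
  refine ⟨4 * ρ * c / L, by positivity, ?_⟩
  filter_upwards [ha, (tendsto_add_atTop_nat 1).eventually ha, hsmall] with k hk hk1 hsk
  have hdk : L / 2 ≤ d k := by linarith [(abs_le.mp hk).1]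
  have hstep : |d (k + 1) - d k| ≤ 2 * (c * lam ^ k) := by
    have : c * lam ^ (k + 1) ≤ c * lam ^ k :=
      mul_le_mul_of_nonneg_left (pow_le_pow_of_le_one hlam0 hlam1.le k.le_succ) hc.le
    calc |d (k + 1) - d k| = |(d (k + 1) - L) - (d k - L)| := by ring_nf
      _ ≤ |d (k + 1) - L| + |d k - L| := abs_sub _ _
      _ ≤ 2 * (c * lam ^ k) := by linarith
  have hdpos : 0 < d k := by linarith
  rw [ratio_sub k hdpos.ne', abs_div, abs_mul, abs_of_pos hρ, abs_of_pos hdpos]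
  calc ρ * |d (k + 1) - d k| / d k ≤ ρ * (2 * (c * lam ^ k)) / (L / 2) :=
        div_le_div₀ (by positivity) (mul_le_mul_of_nonneg_left hstep hρ.le) (by positivity) hdk
    _ = 4 * ρ * c / L * lam ^ k := by field_simp; ring

lemma abs_sum_mulVec_sub_sum_mulVec_le {ι κ : Type*} [Fintype ι] [Fintype κ]
    {A P : Matrix ι κ ℝ} {ε : ℝ} (h : ∀ i j, |A i j - P i j| ≤ ε) (x : κ → ℝ) :
    |∑ i, (A *ᵥ x) i - ∑ i, (P *ᵥ x) i| ≤ Fintype.card ι * ε * ∑ j, |x j| := by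
  rw [← Finset.sum_sub_distrib]
  calc |∑ i, ((A *ᵥ x) i - (P *ᵥ x) i)| ≤ ∑ i, |(A *ᵥ x) i - (P *ᵥ x) i| :=
        Finset.abs_sum_le_sum_abs _ _
    _ ≤ ∑ _i : ι, ε * ∑ j, |x j| := by
        refine Finset.sum_le_sum fun i _ => ?_
        rw [← Pi.sub_apply, ← sub_mulVec, Finset.mul_sum]
        refine (Finset.abs_sum_le_sum_abs _ _).trans (Finset.sum_le_sum fun j _ => ?_)
        rw [abs_mul]
        exact mul_le_mul_of_nonneg_right (h i j) (abs_nonneg _)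
    _ = Fintype.card ι * ε * ∑ j, |x j| := by
        rw [Finset.sum_const, Finset.card_univ, nsmul_eq_mul, mul_assoc]

lemma sum_vecMulVec_mulVec {ι κ : Type*} [Fintype ι] [Fintype κ] (u : ι → ℝ) (v x : κ → ℝ) :
    ∑ i, (vecMulVec u v *ᵥ x) i = (∑ i, u i) * (v ⬝ᵥ x) := by
  simp [vecMulVec_mulVec, ← Finset.sum_mul]

lemma mulVec_nonneg {ι κ : Type*} [Fintype κ] {A : Matrix ι κ ℝ} {x : κ → ℝ}
    (hA : ∀ i j, 0 ≤ A i j) (hx : ∀ j, 0 ≤ x j) (i : ι) : 0 ≤ (A *ᵥ x) i :=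
  Finset.sum_nonneg fun j _ => mul_nonneg (hA i j) (hx j)

lemma pos_of_mulVec_eq_smul {ι : Type*} [Fintype ι] [Nonempty ι] {B : Matrix ι ι ℝ}
    {m : ι → ℝ} {ρ : ℝ} (hB : ∀ i j, 0 < B i j) (hm : ∀ i, 0 < m i) (heig : B *ᵥ m = ρ • m) :
    0 < ρ := by
  obtain ⟨i⟩ := ‹Nonempty ι›
  have hBm : 0 < (B *ᵥ m) i :=
    Finset.sum_pos (fun j _ => mul_pos (hB i j) (hm j)) Finset.univ_nonempty
  rw [heig, Pi.smul_apply, smul_eq_mul] at hBm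
  exact pos_of_mul_pos_left hBm (hm i).le

theorem stmt11_general {n : ℕ} (B : Matrix (Fin n) (Fin n) ℝ)
    (hpos : ∀ i j, 0 < B i j)
    (ρ : ℝ)
    (m mt : Fin n → ℝ) (hm : ∀ i, 0 < m i) (hmt : ∀ i, 0 < mt i)
    (heig : B *ᵥ m = ρ • m)
    (lam : ℝ) (hlam0 : 0 < lam) (hlam1 : lam < 1)
    (happrox : ∃ N : ℕ, ∀ n' ≥ N, ∀ i j,
      |ρ⁻¹ ^ n' * (B ^ n') i j - m i * mt j| ≤ lam ^ n')
    (x : Fin n → ℝ) (hx : ∀ i, 0 ≤ x i) (hx0 : x ≠ 0) :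
    ∃ C > (0 : ℝ), ∃ μ : ℝ, 0 < μ ∧ μ < 1 ∧ ∃ N : ℕ, ∀ n' ≥ N,
      |(∑ i, |(B ^ (n' + 1) *ᵥ x) i|) / (∑ i, |(B ^ n' *ᵥ x) i|) - ρ| ≤ C * μ ^ n' := by
  obtain ⟨j₀, hj₀⟩ := Function.ne_iff.mp hx0
  have : Nonempty (Fin n) := ⟨j₀⟩
  have hρ : 0 < ρ := pos_of_mulVec_eq_smul hpos hm heig
  have hL : 0 < (∑ i, m i) * (mt ⬝ᵥ x) :=
    mul_pos (Finset.sum_pos (fun i _ => hm i) Finset.univ_nonempty)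
      (Finset.sum_pos' (fun j _ => mul_nonneg (hmt j).le (hx j))
        ⟨j₀, Finset.mem_univ _, mul_pos (hmt j₀) ((hx j₀).lt_of_ne' hj₀)⟩)
  have hc : 0 < (n : ℝ) * ∑ j, |x j| :=
    mul_pos (Nat.cast_pos.mpr (Fin.pos j₀))
      (Finset.sum_pos' (fun j _ => abs_nonneg _) ⟨j₀, Finset.mem_univ _, abs_pos.mpr hj₀⟩)
  have hl1 (k : ℕ) : ∑ i, |(B ^ k *ᵥ x) i| = ∑ i, (B ^ k *ᵥ x) i :=
    Finset.sum_congr rfl fun i _ =>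
      abs_of_nonneg (mulVec_nonneg (pow_apply_nonneg (fun i j => (hpos i j).le) k) hx i)
  have happrox' : ∀ᶠ k in atTop, |ρ⁻¹ ^ k * ∑ i, (B ^ k *ᵥ x) i - (∑ i, m i) * (mt ⬝ᵥ x)|
      ≤ ((n : ℝ) * ∑ j, |x j|) * lam ^ k := by
    obtain ⟨N, hN⟩ := happrox
    filter_upwards [eventually_ge_atTop N] with k hk
    have := abs_sum_mulVec_sub_sum_mulVec_le (A := ρ⁻¹ ^ k • B ^ k) (P := vecMulVec m mt)
      (hN k hk) x
    simp only [smul_mulVec, Pi.smul_apply, smul_eq_mul, ← Finset.mul_sum, sum_vecMulVec_mulVec,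
      Fintype.card_fin] at this
    exact this.trans_eq (by ring)
  obtain ⟨C, hC, hratio⟩ :=
    exists_abs_div_sub_le_of_abs_inv_pow_mul_sub_le hρ hL hc hlam0.le hlam1 happrox'
  obtain ⟨N, hN⟩ := eventually_atTop.mp hratio
  exact ⟨C, hC, lam, hlam0, hlam1, N, fun k hk => by simpa only [hl1] using hN k hk⟩

theorem stmt11 {n : ℕ} (B : Matrix (Fin n) (Fin n) ℝ)
    (hpos : ∀ i j, 0 < B i j)
    (ρ : ℝ) (hρ : ρ = specRad B)
    (m mt : Fin n → ℝ) (hm : ∀ i, 0 < m i) (hmt : ∀ i, 0 < mt i)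
    (heig : B *ᵥ m = ρ • m) (heigL : mt ᵥ* B = ρ • mt)
    (hnorm : mt ⬝ᵥ m = 1)
    (lam : ℝ) (hlam0 : 0 < lam) (hlam1 : lam < 1)
    (happrox : ∃ N : ℕ, ∀ n' ≥ N, ∀ i j,
      |ρ⁻¹ ^ n' * (B ^ n') i j - m i * mt j| ≤ lam ^ n')
    (x : Fin n → ℝ) (hx : ∀ i, 0 ≤ x i) (hx0 : x ≠ 0) :
    ∃ C > (0 : ℝ), ∃ μ : ℝ, 0 < μ ∧ μ < 1 ∧ ∃ N : ℕ, ∀ n' ≥ N,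
      |(∑ i, |(B ^ (n' + 1) *ᵥ x) i|) / (∑ i, |(B ^ n' *ᵥ x) i|) - ρ| ≤ C * μ ^ n' :=
  stmt11_general B hpos ρ m mt hm hmt heig lam hlam0 hlam1 happrox x hx hx0
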